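/- arXiv:2005.05454 — 4 statements merged into one kernel-verified Lean document; each statement's English description precedes it below -/
import Mathlib

section
/- Let ω > 1/2, c := 1/(2ω), a, b > 0, λ₁(μ) := √((1−μ)(μ−c)/(2b)), μ_S(λ) := c + λb/(2a), λ* := 2a(1−c)/(8a² + b), and λ̂* := 2(1−c)a/b. Then for every λ with 0 < λ ≤ λ̂*, one has λ > λ₁(μ_S(λ)) if and only if λ > λ*. -/
theorem stmt_9 (ω a b : ℝ) (hω : 1/2 < ω) (ha : 0 < a) (hb : 0 < b)
    (c : ℝ) (hc : c = 1/(2*ω))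
    (lams : ℝ) (hlams : lams = 2*a*(1-c)/(8*a^2 + b))
    (lhat : ℝ) (hlhat : lhat = 2*(1-c)*a/b)
    (l : ℝ) (hl : 0 < l) (hl2 : l ≤ lhat) :
    Real.sqrt ((1 - (c + l*b/(2*a)))*((c + l*b/(2*a)) - c)/(2*b)) < l ↔ lams < l := by
  have hc1 : c < 1 := by
    rw [hc, div_lt_one (by linarith)]; linarith
  have hlb : 0 < l * b := mul_pos hl hb
  have key : (1 - (c + l*b/(2*a)))*((c + l*b/(2*a)) - c)/(2*b)
      = ((2*a*(1-c) - l*b) * (l*b)) / (2*b*(2*a)*(2*a)) := by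
    field_simp
    ring
  rw [Real.sqrt_lt' hl, hlams, key,
    div_lt_iff₀ (by positivity : (0:ℝ) < 2*b*(2*a)*(2*a)),
    div_lt_iff₀ (by positivity : (0:ℝ) < 8*a^2 + b)]
  constructor
  · intro h
    nlinarith [mul_pos hl hb, mul_pos (mul_pos ha ha) (mul_pos hl hl)]
  · intro h
    nlinarith [mul_pos hl hb, mul_pos (mul_pos ha ha) (mul_pos hl hl)]
end

section
/- Let ω > 1/2, c := 1/(2ω), a, b > 0, with λ₁, λ₂, μ_S, λ*, λ̂* as defined. If λ* < λ ≤ λ̂*, then λ > max(λ₁(μ_S(λ)), λ₂(μ_S(λ))). -/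
theorem stmt_10 (ω a b : ℝ) (hω : 1/2 < ω) (ha : 0 < a) (hb : 0 < b)
    (c : ℝ) (hc : c = 1/(2*ω))
    (lams : ℝ) (hlams : lams = 2*a*(1-c)/(8*a^2 + b))
    (lhat : ℝ) (hlhat : lhat = 2*(1-c)*a/b)
    (l : ℝ) (hl : lams < l) (hl2 : l ≤ lhat) :
    max (Real.sqrt ((1 - (c + l*b/(2*a)))*((c + l*b/(2*a)) - c)/(2*b)))
        ((1 - (c + l*b/(2*a)))/(4*a)) < l := by
  have hω0 : 0 < ω := by linarith
  have hc0 : 0 < c := by rw [hc]; positivity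
  have hc1 : c < 1 := by
    rw [hc]
    rw [div_lt_one (by linarith)]
    linarith
  have hden : (0:ℝ) < 8*a^2 + b := by positivity
  have hlams0 : 0 < lams := by
    rw [hlams]; apply div_pos (by nlinarith) hden
  have hl0 : 0 < l := lt_trans hlams0 hl
  -- key: (1-c) - l*b/(2a) < 4*a*l
  have hkey : (1-c) - l*b/(2*a) < 4*a*l := by
    rw [hlams, div_lt_iff₀ hden] at hl
    have hd : l*b/(2*a)*(2*a) = l*b := div_mul_cancel₀ _ (by positivity)
    nlinarith [hd, hl, ha]
  have hnn : 0 ≤ (1-c) - l*b/(2*a) := by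
    rw [hlhat, le_div_iff₀ hb] at hl2
    rw [sub_nonneg, div_le_iff₀ (by positivity : (0:ℝ) < 2*a)]
    nlinarith
  have h2 : (1 - (c + l*b/(2*a)))/(4*a) < l := by
    rw [div_lt_iff₀ (by positivity : (0:ℝ) < 4*a)]
    nlinarith
  apply max_lt _ h2
  rw [show (1 - (c + l*b/(2*a)))*((c + l*b/(2*a)) - c)/(2*b)
      = ((1-c) - l*b/(2*a)) * (l*b/(2*a))/(2*b) by ring]
  have hx : ((1-c) - l*b/(2*a)) * (l*b/(2*a))/(2*b) < l^2 := by
    have hbdiv : l*b/(2*a) > 0 := by positivity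
    have : ((1-c) - l*b/(2*a)) * (l*b/(2*a)) < (4*a*l) * (l*b/(2*a)) := by
      apply mul_lt_mul_of_pos_right hkey hbdiv
    rw [div_lt_iff₀ (by positivity : (0:ℝ) < 2*b)]
    calc ((1-c) - l*b/(2*a)) * (l*b/(2*a)) < (4*a*l) * (l*b/(2*a)) := this
      _ = l^2 * (2*b) := by field_simp; ring
  exact (Real.sqrt_lt' hl0).mpr (by nlinarith [hx])
end

section
/- Let ω > 1/2, c := 1/(2ω), a, b > 0 with K := 8a²/b > 1, and ε, σ, h > 0. Define τ₁(μ) := 2ε²σh²(μ−c)/(2ε²b − (1−μ)(μ−c)σ²h²) and μ_S(λ) := c + λb/(2a). Then τ₁ is strictly increasing on the set {μ ∈ (c, min(μ_S(ε/(σh)), 1)] : 2ε²b − (1−μ)(μ−c)σ²h² > 0}: for any μ₁ < μ₂ in this set, τ₁(μ₁) < τ₁(μ₂). -/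
theorem stmt_13 (ω a b ε σ h : ℝ) (hω : 1/2 < ω) (ha : 0 < a) (hb : 0 < b)
    (hε : 0 < ε) (hσ : 0 < σ) (hh : 0 < h)
    (c : ℝ) (hc : c = 1/(2*ω)) (K : ℝ) (hK : K = 8*a^2/b) (hK1 : 1 < K)
    (τ : ℝ → ℝ) (hτ : ∀ μ, τ μ = 2*ε^2*σ*h^2*(μ-c)/(2*ε^2*b - (1-μ)*(μ-c)*σ^2*h^2))
    (μS : ℝ → ℝ) (hμS : ∀ l, μS l = c + l*b/(2*a))
    (μ₁ μ₂ : ℝ)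
    (h1 : μ₁ ∈ Set.Ioc c (min (μS (ε/(σ*h))) 1))
    (h2 : μ₂ ∈ Set.Ioc c (min (μS (ε/(σ*h))) 1))
    (hD1 : 0 < 2*ε^2*b - (1-μ₁)*(μ₁-c)*σ^2*h^2)
    (hD2 : 0 < 2*ε^2*b - (1-μ₂)*(μ₂-c)*σ^2*h^2)
    (hlt : μ₁ < μ₂) :
    τ μ₁ < τ μ₂ := by
  obtain ⟨hc1, hu1⟩ := h1
  obtain ⟨hc2, hu2⟩ := h2
  have hS := hμS (ε/(σ*h))
  have hsh : 0 < σ*h := mul_pos hσ hh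
  have hb8 : b < 8*a^2 := by
    rw [hK, lt_div_iff₀ hb] at hK1; linarith
  have hu1' : μ₁ - c ≤ ε/(σ*h)*b/(2*a) := by
    have := le_trans hu1 (min_le_left _ _)
    rw [hS] at this; linarith
  have hu2' : μ₂ - c ≤ ε/(σ*h)*b/(2*a) := by
    have := le_trans hu2 (min_le_left _ _)
    rw [hS] at this; linarith
  have hbound : ε/(σ*h)*b/(2*a)*(σ*h) = ε*b/(2*a) := by
    field_simp
  have hm1 : 0 < μ₁ - c := by linarith
  have hm2 : 0 < μ₂ - c := by linarith
  -- key: (μ₁-c)(μ₂-c)σ²h² < 2ε²b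
  have hkey : (μ₁-c)*(μ₂-c)*(σ^2*h^2) < 2*ε^2*b := by
    have e1 : (μ₁-c)*(σ*h) ≤ ε*b/(2*a) := by
      calc (μ₁-c)*(σ*h) ≤ (ε/(σ*h)*b/(2*a))*(σ*h) :=
            mul_le_mul_of_nonneg_right hu1' hsh.le
        _ = ε*b/(2*a) := hbound
    have e2 : (μ₂-c)*(σ*h) ≤ ε*b/(2*a) := by
      calc (μ₂-c)*(σ*h) ≤ (ε/(σ*h)*b/(2*a))*(σ*h) :=
            mul_le_mul_of_nonneg_right hu2' hsh.le
        _ = ε*b/(2*a) := hbound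
    have e3 : (μ₁-c)*(σ*h)*((μ₂-c)*(σ*h)) ≤ (ε*b/(2*a))*(ε*b/(2*a)) := by
      apply mul_le_mul e1 e2 (by positivity) (by positivity)
    have e4 : (ε*b/(2*a))*(ε*b/(2*a)) < 2*ε^2*b := by
      rw [div_mul_div_comm, div_lt_iff₀ (by positivity)]
      nlinarith [mul_lt_mul_of_pos_left hb8 (mul_pos (mul_pos hε hε) hb)]
    nlinarith [e3, e4]
  rw [hτ μ₁, hτ μ₂, div_lt_div_iff₀ hD1 hD2]
  have hA : 0 < 2*ε^2*σ*h^2 := by positivity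
  have hpos : 0 < (2*ε^2*σ*h^2) * ((μ₂-μ₁) * (2*ε^2*b - (μ₁-c)*(μ₂-c)*(σ^2*h^2))) :=
    mul_pos hA (mul_pos (sub_pos.mpr hlt) (sub_pos.mpr hkey))
  have hid : 2*ε^2*σ*h^2*(μ₂-c) * (2*ε^2*b - (1-μ₁)*(μ₁-c)*σ^2*h^2)
      - 2*ε^2*σ*h^2*(μ₁-c) * (2*ε^2*b - (1-μ₂)*(μ₂-c)*σ^2*h^2)
      = (2*ε^2*σ*h^2) * ((μ₂-μ₁) * (2*ε^2*b - (μ₁-c)*(μ₂-c)*(σ^2*h^2))) := by ring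
  linarith
end

section
/- Let ω > 1/2, c := 1/(2ω), a, b > 0 with K := 8a²/b > 1. With λ₁(μ) := √((1−μ)(μ−c)/(2b)), λ₂(μ) := (1−μ)/(4a), μ* := (1 + cK)/(1 + K), and λ* := 2a(1−c)/(8a² + b), the maximum over μ ∈ (c, 1] of min(λ₁(μ), λ₂(μ)) equals λ*, and it is attained at μ = μ*. -/
theorem stmt_14 (ω a b : ℝ) (hω : 1/2 < ω) (ha : 0 < a) (hb : 0 < b)
    (c : ℝ) (hc : c = 1/(2*ω)) (K : ℝ) (hK : K = 8*a^2/b) (hK1 : 1 < K)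
    (μs : ℝ) (hμs : μs = (1 + c*K)/(1 + K))
    (lams : ℝ) (hlams : lams = 2*a*(1-c)/(8*a^2 + b)) :
    μs ∈ Set.Ioc c 1 ∧
    min (Real.sqrt ((1-μs)*(μs-c)/(2*b))) ((1-μs)/(4*a)) = lams ∧
    (∀ μ ∈ Set.Ioc c 1,
      min (Real.sqrt ((1-μ)*(μ-c)/(2*b))) ((1-μ)/(4*a)) ≤ lams) := by
  have hω0 : 0 < ω := by linarith
  have hc0 : 0 < c := by rw [hc]; positivity
  have hc1 : c < 1 := by
    rw [hc]
    rw [div_lt_one (by linarith)]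
    linarith
  have hba : b < 8*a^2 := by
    rw [hK, lt_div_iff₀ hb] at hK1; linarith
  have hD : (0:ℝ) < 8*a^2 + b := by positivity
  have hμs' : μs = (b + 8*a^2*c)/(8*a^2 + b) := by
    rw [hμs, hK]
    field_simp
    ring
  have hcμ : c < μs := by
    rw [hμs', lt_div_iff₀ hD]
    nlinarith [mul_pos hb (sub_pos.mpr hc1)]
  have hμ1 : μs ≤ 1 := by
    rw [hμs', div_le_one hD]
    nlinarith [mul_pos ha ha, sub_pos.mpr hc1]
  have hlams0 : 0 ≤ lams := by
    rw [hlams]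
    apply div_nonneg _ (le_of_lt hD)
    nlinarith
  have hE : (1-μs)*(μs-c)/(2*b) = lams^2 := by
    rw [hμs', hlams]
    field_simp
    ring
  have h2 : (1-μs)/(4*a) = lams := by
    rw [hμs', hlams]
    field_simp
    ring
  refine ⟨⟨hcμ, hμ1⟩, ?_, ?_⟩
  · rw [hE, h2, Real.sqrt_sq hlams0, min_self]
  · rintro μ ⟨hμc, hμle1⟩
    by_cases h : (1-μ)/(4*a) ≤ lams
    · exact le_trans (min_le_right _ _) h
    · push_neg at h
      have hμμs : μ < μs := by
        rw [← h2, div_lt_div_iff₀ (by positivity) (by positivity)] at h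
        nlinarith
      have hvertex : 2*μs ≤ 1 + c := by
        rw [hμs', ← mul_div_assoc, div_le_iff₀ hD]
        nlinarith [mul_nonneg (sub_pos.mpr hba).le (sub_pos.mpr hc1).le]
      have hf : (1-μ)*(μ-c) ≤ (1-μs)*(μs-c) := by
        nlinarith [mul_nonneg (sub_pos.mpr hμμs).le (by linarith : (0:ℝ) ≤ 1 + c - μ - μs)]
      calc min (Real.sqrt ((1-μ)*(μ-c)/(2*b))) ((1-μ)/(4*a))
          ≤ Real.sqrt ((1-μ)*(μ-c)/(2*b)) := min_le_left _ _
        _ ≤ Real.sqrt (lams^2) := by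
            apply Real.sqrt_le_sqrt
            rw [← hE]
            gcongr
        _ = lams := Real.sqrt_sq hlams0
end
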